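/- Let (C•, d) be a finite-dimensional Hilbert cochain complex, and set A_p := Tr(exp(−t Δ_p^{cl})) for p ≥ 1 and A_0 := 0, where Δ_p^{cl} is the restriction of Δ_p to im d_{p−1}. Then for every t > 0, Σ_p (−1)^p p (Tr(exp(−t Δ_p)) − dim H^p(C•,d)) = Σ_p (−1)^p Tr(exp(−t Δ_p^{cl})). -/

import Mathlib

/-- Laplacians `Δ_p = d_p* d_p + d_{p-1} d_{p-1}*` (convention `d_{-1} = 0`). -/
noncomputable def Lap (C : ℕ → Type) [∀ p, NormedAddCommGroup (C p)]
    [∀ p, InnerProductSpace ℂ (C p)] [∀ p, FiniteDimensional ℂ (C p)]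
    (d : ∀ p, C p →ₗ[ℂ] C (p + 1)) : ∀ p, C p →ₗ[ℂ] C p
  | 0 => LinearMap.adjoint (d 0) ∘ₗ d 0
  | (p + 1) => LinearMap.adjoint (d (p + 1)) ∘ₗ d (p + 1) + d p ∘ₗ LinearMap.adjoint (d p)

/-- `dim H^p(C•,d)`. -/
noncomputable def hdim (C : ℕ → Type) [∀ p, NormedAddCommGroup (C p)]
    [∀ p, InnerProductSpace ℂ (C p)] [∀ p, FiniteDimensional ℂ (C p)]
    (d : ∀ p, C p →ₗ[ℂ] C (p + 1)) : ℕ → ℕ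
  | 0 => Module.finrank ℂ (LinearMap.ker (d 0))
  | (p + 1) =>
      Module.finrank ℂ
        (↥(LinearMap.ker (d (p + 1))) ⧸
          Submodule.comap (LinearMap.ker (d (p + 1))).subtype (LinearMap.range (d p)))

/-- `Tr (exp (-t T))`. -/
noncomputable def heatTr {E : Type*} [NormedAddCommGroup E] [InnerProductSpace ℂ E]
    [FiniteDimensional ℂ E] (T : E →ₗ[ℂ] E) (t : ℝ) : ℂ :=
  LinearMap.trace ℂ E
    (NormedSpace.exp ((-(t : ℂ)) • LinearMap.toContinuousLinearMap T)).toLinearMap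

/-!
Hodge theory in each degree: `C^{p+1}` is the orthogonal sum of `im d_p`, the harmonic space
`ker d_{p+1} ⊓ ker d_p†` and `im d_{p+1}†`. The Laplacian `Δ_{p+1}` preserves the three pieces and
vanishes on the harmonic one, whose dimension is `dim H^{p+1}`; on `im d_{p+1}†` it is conjugate,
through `d_{p+1}`, to `Δ_{p+2}` on `im d_{p+1}` (since `d Δ = Δ d`). Hence
`Tr exp(-t Δ_{p+1}) - dim H^{p+1} = A_{p+1} + A_{p+2}`, and the weighted alternating sum
telescopes by Abel summation, `A` vanishing above the top degree.
-/

open Module LinearMap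

/-- `heatTr` for normed spaces: the products `U × V` used to split it carry no inner product. -/
noncomputable def heatTrace {E : Type*} [NormedAddCommGroup E] [NormedSpace ℂ E]
    [FiniteDimensional ℂ E] (T : E →ₗ[ℂ] E) (t : ℝ) : ℂ :=
  trace ℂ E (NormedSpace.exp ((-(t : ℂ)) • T.toContinuousLinearMap)).toLinearMap

theorem heatTr_eq_heatTrace {E : Type*} [NormedAddCommGroup E] [InnerProductSpace ℂ E]
    [FiniteDimensional ℂ E] (T : E →ₗ[ℂ] E) (t : ℝ) : heatTr T t = heatTrace T t := rfl

namespace ContinuousLinearMap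

variable (E F : Type*) [NormedAddCommGroup E] [NormedSpace ℂ E]
  [NormedAddCommGroup F] [NormedSpace ℂ F]

noncomputable def prodMapRingHom : (E →L[ℂ] E) × (F →L[ℂ] F) →+* (E × F →L[ℂ] E × F) where
  toFun A := A.1.prodMap A.2
  map_one' := by ext <;> simp
  map_mul' _ _ := by ext <;> simp
  map_zero' := by ext <;> simp
  map_add' _ _ := by ext <;> simp

theorem continuous_prodMapRingHom : Continuous (prodMapRingHom E F) :=
  (prodMapL ℂ E E F F).continuous

end ContinuousLinearMap

section HeatTrace

variable {E F : Type*} [NormedAddCommGroup E] [NormedSpace ℂ E] [FiniteDimensional ℂ E]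
  [NormedAddCommGroup F] [NormedSpace ℂ F] [FiniteDimensional ℂ F]

theorem heatTrace_zero (t : ℝ) : heatTrace (0 : E →ₗ[ℂ] E) t = finrank ℂ E := by
  simp [heatTrace, NormedSpace.exp_zero]

theorem heatTrace_of_subsingleton [Subsingleton E] (T : E →ₗ[ℂ] E) (t : ℝ) :
    heatTrace T t = 0 :=
  (congrArg (trace ℂ E) (Subsingleton.elim _ 0)).trans (map_zero _)

theorem heatTrace_congr (e : F ≃ₗ[ℂ] E) {S : F →ₗ[ℂ] F} {T : E →ₗ[ℂ] E}
    (hST : T ∘ₗ e = e ∘ₗ S) (t : ℝ) : heatTrace T t = heatTrace S t := by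
  let _ : NormedAlgebra ℚ (E →L[ℂ] E) := .restrictScalars ℚ ℂ _
  let _ : NormedAlgebra ℚ (F →L[ℂ] F) := .restrictScalars ℚ ℂ _
  let c := e.toContinuousLinearEquiv.conjContinuousAlgEquiv
  have hT : T.toContinuousLinearMap = c S.toContinuousLinearMap := by
    ext x
    obtain ⟨y, rfl⟩ := e.surjective x
    simpa [c] using LinearMap.congr_fun hST y
  rw [heatTrace, heatTrace, hT, ← map_smul, ← NormedSpace.map_exp c c.continuous,
    ← trace_conj' _ e]
  rfl

theorem heatTrace_prodMap (S : E →ₗ[ℂ] E) (T : F →ₗ[ℂ] F) (t : ℝ) :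
    heatTrace (S.prodMap T) t = heatTrace S t + heatTrace T t := by
  let _ : NormedAlgebra ℚ (E →L[ℂ] E) := .restrictScalars ℚ ℂ _
  let _ : NormedAlgebra ℚ (F →L[ℂ] F) := .restrictScalars ℚ ℂ _
  let _ : NormedAlgebra ℚ (E × F →L[ℂ] E × F) := .restrictScalars ℚ ℂ _
  let π := ContinuousLinearMap.prodMapRingHom E F
  have h : (-(t : ℂ)) • (S.prodMap T).toContinuousLinearMap
      = π ((-(t : ℂ)) • (S.toContinuousLinearMap, T.toContinuousLinearMap)) := by
    ext <;> simp [π, ContinuousLinearMap.prodMapRingHom]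
  rw [heatTrace, h, ← NormedSpace.map_exp π (ContinuousLinearMap.continuous_prodMapRingHom E F),
    heatTrace, heatTrace, ← trace_prodMap']
  congr 1
  ext <;> simp [π, ContinuousLinearMap.prodMapRingHom, Prod.fst_exp, Prod.snd_exp]

omit [FiniteDimensional ℂ F] in
theorem heatTrace_restrict_of_eq_top {T : E →ₗ[ℂ] E} {K : Submodule ℂ E}
    (hK : ∀ x ∈ K, T x ∈ K) (htop : K = ⊤) (t : ℝ) :
    heatTrace (T.restrict hK) t = heatTrace T t :=
  (heatTrace_congr (LinearEquiv.ofTop K htop) (by ext; rfl) t).symm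

omit [FiniteDimensional ℂ E] [FiniteDimensional ℂ F] in
theorem LinearMap.map_mem_sup {T : E →ₗ[ℂ] E} {U V : Submodule ℂ E}
    (hU : ∀ x ∈ U, T x ∈ U) (hV : ∀ x ∈ V, T x ∈ V) : ∀ x ∈ U ⊔ V, T x ∈ U ⊔ V := by
  intro x hx
  obtain ⟨u, hu, v, hv, rfl⟩ := Submodule.mem_sup.mp hx
  rw [map_add]
  exact add_mem (Submodule.mem_sup_left (hU u hu)) (Submodule.mem_sup_right (hV v hv))

omit [FiniteDimensional ℂ F] in
theorem heatTrace_restrict_sup {T : E →ₗ[ℂ] E} {U V : Submodule ℂ E} (hUV : Disjoint U V)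
    (hU : ∀ x ∈ U, T x ∈ U) (hV : ∀ x ∈ V, T x ∈ V) (t : ℝ) :
    heatTrace (T.restrict (map_mem_sup hU hV)) t =
      heatTrace (T.restrict hU) t + heatTrace (T.restrict hV) t := by
  let ι := (Submodule.inclusion (le_sup_left : U ≤ U ⊔ V)).coprod
    (Submodule.inclusion (le_sup_right : V ≤ U ⊔ V))
  have hι : Function.Bijective ι := by
    constructor
    · rw [← LinearMap.ker_eq_bot, LinearMap.ker_eq_bot']
      rintro ⟨u, v⟩ huv
      have huv : (u : E) = -v := eq_neg_of_add_eq_zero_left (congrArg Subtype.val huv)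
      have hu : (u : E) = 0 :=
        Submodule.disjoint_def.mp hUV u u.2 (huv ▸ V.neg_mem v.2)
      have hv : (v : E) = 0 := by rwa [hu, zero_eq_neg] at huv
      ext <;> simp [hu, hv]
    · rintro ⟨x, hx⟩
      obtain ⟨u, hu, v, hv, rfl⟩ := Submodule.mem_sup.mp hx
      exact ⟨(⟨u, hu⟩, ⟨v, hv⟩), rfl⟩
  rw [← heatTrace_prodMap]
  exact heatTrace_congr (LinearEquiv.ofBijective ι hι) (by ext <;> simp [ι]) t

end HeatTrace

section InnerProduct

variable {F E G : Type*}
  [NormedAddCommGroup F] [InnerProductSpace ℂ F] [FiniteDimensional ℂ F]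
  [NormedAddCommGroup E] [InnerProductSpace ℂ E] [FiniteDimensional ℂ E]
  [NormedAddCommGroup G] [InnerProductSpace ℂ G] [FiniteDimensional ℂ G]

theorem heatTrace_restrict_range_adjoint_eq (B : E →ₗ[ℂ] G) {S : E →ₗ[ℂ] E} {R : G →ₗ[ℂ] G}
    (hBS : B ∘ₗ S = R ∘ₗ B) (hS : ∀ x ∈ range B.adjoint, S x ∈ range B.adjoint)
    (hR : ∀ y ∈ range B, R y ∈ range B) (t : ℝ) :
    heatTrace (S.restrict hS) t = heatTrace (R.restrict hR) t := by
  let β := B.restrict (p := range B.adjoint) fun x _ => mem_range_self B x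
  have hβ : Function.Bijective β := by
    constructor
    · rw [← LinearMap.ker_eq_bot, LinearMap.ker_eq_bot']
      rintro ⟨x, hx⟩ hBx
      have hx' : x ∈ (ker B)ᗮ := by rwa [orthogonal_ker]
      have hker : x ∈ ker B := congrArg Subtype.val hBx
      simpa using (ker B).inf_orthogonal_eq_bot.le ⟨hker, hx'⟩
    · rintro ⟨y, hy⟩
      rw [← range_self_comp_adjoint] at hy
      obtain ⟨z, rfl⟩ := hy
      exact ⟨⟨B.adjoint z, mem_range_self _ z⟩, rfl⟩
  refine (heatTrace_congr (LinearEquiv.ofBijective β hβ) ?_ t).symm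
  ext x
  exact (LinearMap.congr_fun hBS x).symm

noncomputable def laplacian (A : F →ₗ[ℂ] E) (B : E →ₗ[ℂ] G) : E →ₗ[ℂ] E :=
  B.adjoint ∘ₗ B + A ∘ₗ A.adjoint

noncomputable abbrev harmonicSpace (A : F →ₗ[ℂ] E) (B : E →ₗ[ℂ] G) : Submodule ℂ E :=
  ker B ⊓ ker A.adjoint

variable {A : F →ₗ[ℂ] E} {B : E →ₗ[ℂ] G}

theorem laplacian_mem_range (hBA : B ∘ₗ A = 0) : ∀ x ∈ range A, laplacian A B x ∈ range A := by
  rintro _ ⟨x, rfl⟩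
  have hBAx : B (A x) = 0 := LinearMap.congr_fun hBA x
  simp only [laplacian, LinearMap.add_apply, comp_apply, hBAx, map_zero, zero_add]
  exact mem_range_self A _

theorem laplacian_mem_range_adjoint (hBA : B ∘ₗ A = 0) :
    ∀ x ∈ range B.adjoint, laplacian A B x ∈ range B.adjoint := by
  rintro _ ⟨y, rfl⟩
  have hAB : A.adjoint (B.adjoint y) = 0 := by
    rw [← comp_apply, ← adjoint_comp, hBA, map_zero, LinearMap.zero_apply]
  simp only [laplacian, LinearMap.add_apply, comp_apply, hAB, map_zero, add_zero]
  exact mem_range_self _ _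

theorem laplacian_eq_zero_of_mem (x : E) (hx : x ∈ harmonicSpace A B) : laplacian A B x = 0 := by
  obtain ⟨hBx, hAx⟩ := hx
  simp [laplacian, mem_ker.mp hBx, mem_ker.mp hAx]

theorem comp_laplacian {H : Type*} [NormedAddCommGroup H] [InnerProductSpace ℂ H]
    [FiniteDimensional ℂ H] {D : G →ₗ[ℂ] H} (hBA : B ∘ₗ A = 0) (hDB : D ∘ₗ B = 0) :
    B ∘ₗ laplacian A B = laplacian B D ∘ₗ B := by
  simp only [laplacian, comp_add, add_comp, comp_assoc, hDB, comp_zero, zero_add]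
  rw [← comp_assoc A.adjoint A B, hBA, zero_comp, add_zero]

theorem range_sup_harmonic_sup_range_adjoint :
    range A ⊔ (harmonicSpace A B ⊔ range B.adjoint) = ⊤ := by
  rw [← Submodule.orthogonal_eq_bot_iff, ← Submodule.inf_orthogonal, ← Submodule.inf_orthogonal,
    orthogonal_range, orthogonal_range, adjoint_adjoint,
    ← (harmonicSpace A B).inf_orthogonal_eq_bot]
  simp only [harmonicSpace]
  ac_rfl

theorem heatTrace_laplacian (hBA : B ∘ₗ A = 0) (t : ℝ) :
    heatTrace (laplacian A B) t =
      heatTrace ((laplacian A B).restrict (laplacian_mem_range hBA)) t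
        + finrank ℂ ↥(harmonicSpace A B)
        + heatTrace ((laplacian A B).restrict (laplacian_mem_range_adjoint hBA)) t := by
  have hH : ∀ x ∈ harmonicSpace A B, laplacian A B x ∈ harmonicSpace A B := fun x hx => by
    rw [laplacian_eq_zero_of_mem x hx]; exact zero_mem _
  have hL0 : (laplacian A B).restrict hH = 0 :=
    LinearMap.ext fun x => Subtype.ext <| by
      rw [coe_restrict_apply, LinearMap.zero_apply, Submodule.coe_zero]
      exact laplacian_eq_zero_of_mem (A := A) (B := B) x x.2
  have hAH : range A ⟂ harmonicSpace A B :=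
    (Submodule.isOrtho_iff_le.2 (by rw [orthogonal_range]; exact inf_le_right)).symm
  have hAB : range A ⟂ range B.adjoint := Submodule.isOrtho_iff_le.2 <| by
    rw [orthogonal_range, adjoint_adjoint]; exact range_le_ker_iff.2 hBA
  have hHB : harmonicSpace A B ⟂ range B.adjoint := Submodule.isOrtho_iff_le.2 <| by
    rw [orthogonal_range, adjoint_adjoint]; exact inf_le_left
  have hHB' := map_mem_sup hH (laplacian_mem_range_adjoint hBA)
  rw [← heatTrace_restrict_of_eq_top (map_mem_sup (laplacian_mem_range hBA) hHB')
      range_sup_harmonic_sup_range_adjoint,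
    heatTrace_restrict_sup (Submodule.isOrtho_sup_right.2 ⟨hAH, hAB⟩).disjoint _ hHB',
    heatTrace_restrict_sup hHB.disjoint hH, hL0, heatTrace_zero, add_assoc]

omit [FiniteDimensional ℂ G] in
theorem finrank_quotient_range_eq_finrank_harmonic (hBA : B ∘ₗ A = 0) :
    finrank ℂ (ker B ⧸ (range A).comap (ker B).subtype) = finrank ℂ ↥(harmonicSpace A B) := by
  have hle : range A ≤ ker B := range_le_ker_iff.2 hBA
  have h1 := Submodule.finrank_quotient_add_finrank ((range A).comap (ker B).subtype)
  have h2 := (Submodule.comapSubtypeEquivOfLe hle).finrank_eq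
  have h3 : finrank ℂ (range A) + finrank ℂ (harmonicSpace A B) = finrank ℂ (ker B) := by
    rw [← Submodule.finrank_add_inf_finrank_orthogonal hle, orthogonal_range, inf_comm]
  omega

end InnerProduct

theorem Finset.sum_range_neg_one_pow_mul_mul_of_eq_add {R : Type*} [CommRing R] (f a : ℕ → R)
    (hf : ∀ p, f (p + 1) = a p + a (p + 1)) (n : ℕ) :
    ∑ p ∈ Finset.range (n + 1), (-1 : R) ^ p * p * f p =
      ∑ p ∈ Finset.range n, (-1 : R) ^ (p + 1) * a p + (-1) ^ n * n * a n := by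
  induction n with
  | zero => simp
  | succ n ih =>
    rw [Finset.sum_range_succ, ih, Finset.sum_range_succ, hf]
    push_cast
    ring

section CochainComplex

variable (C : ℕ → Type) [∀ p, NormedAddCommGroup (C p)] [∀ p, InnerProductSpace ℂ (C p)]
  [∀ p, FiniteDimensional ℂ (C p)] (d : ∀ p, C p →ₗ[ℂ] C (p + 1))

theorem heatTr_Lap_succ (hd : ∀ p, d (p + 1) ∘ₗ d p = 0) (t : ℝ) (p : ℕ) :
    heatTr (Lap C d (p + 1)) t =
      heatTr ((Lap C d (p + 1)).restrict (laplacian_mem_range (hd p))) t + hdim C d (p + 1)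
        + heatTr ((Lap C d (p + 1 + 1)).restrict (laplacian_mem_range (hd (p + 1)))) t := by
  have hdim_eq : hdim C d (p + 1) = finrank ℂ ↥(harmonicSpace (d p) (d (p + 1))) :=
    finrank_quotient_range_eq_finrank_harmonic (hd p)
  simp only [heatTr_eq_heatTrace, hdim_eq]
  refine (heatTrace_laplacian (hd p) t).trans ?_
  rw [heatTrace_restrict_range_adjoint_eq (d (p + 1)) (comp_laplacian (hd p) (hd (p + 1))) _
    (laplacian_mem_range (hd (p + 1)))]
  rfl

end CochainComplex

theorem alternating_weighted_heat_trace_general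
    (n : ℕ) (C : ℕ → Type) [∀ p, NormedAddCommGroup (C p)]
    [∀ p, InnerProductSpace ℂ (C p)] [∀ p, FiniteDimensional ℂ (C p)]
    (d : ∀ p, C p →ₗ[ℂ] C (p + 1))
    (hd : ∀ p, d (p + 1) ∘ₗ d p = 0)
    (htriv : ∀ p, n < p → Module.finrank ℂ (C p) = 0)
    (h : ∀ p, ∀ x ∈ LinearMap.range (d p), Lap C d (p + 1) x ∈ LinearMap.range (d p))
    (t : ℝ) :
    ∑ p ∈ Finset.range (n + 1),
        (-1 : ℂ) ^ p * (p : ℂ) * (heatTr (Lap C d p) t - (hdim C d p : ℂ)) =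
      ∑ p ∈ Finset.range n, (-1 : ℂ) ^ (p + 1) * heatTr ((Lap C d (p + 1)).restrict (h p)) t := by
  set a : ℕ → ℂ := fun p => heatTr ((Lap C d (p + 1)).restrict (h p)) t
  have ha : a n = 0 := by
    have : Subsingleton (C (n + 1)) := finrank_zero_iff.mp (htriv (n + 1) n.lt_succ_self)
    exact heatTrace_of_subsingleton _ t
  rw [Finset.sum_range_neg_one_pow_mul_mul_of_eq_add _ a
    (fun p => by rw [heatTr_Lap_succ C d hd t p]; ring) n, ha, mul_zero, add_zero]

/-- with `A_0 = 0` and `A_{p+1} = Tr(exp(-t Δ_{p+1}^{cl}))`, where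
`Δ_{p+1}^{cl}` is the restriction of `Δ_{p+1}` to `im d_p` (the hypothesis `h` — a provable
fact — expresses that `Δ_{p+1}` preserves `im d_p`), one has for every `t > 0`:
`Σ_p (-1)^p p (Tr exp(-t Δ_p) - dim H^p) = Σ_p (-1)^p A_p`.  (On the right the `p = 0`
term vanishes, so the sum is written starting from `p = 1`.) -/
theorem alternating_weighted_heat_trace
    (n : ℕ) (C : ℕ → Type) [∀ p, NormedAddCommGroup (C p)]
    [∀ p, InnerProductSpace ℂ (C p)] [∀ p, FiniteDimensional ℂ (C p)]
    (d : ∀ p, C p →ₗ[ℂ] C (p + 1))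
    (hd : ∀ p, d (p + 1) ∘ₗ d p = 0)
    (htriv : ∀ p, n < p → Module.finrank ℂ (C p) = 0)
    (h : ∀ p, ∀ x ∈ LinearMap.range (d p), Lap C d (p + 1) x ∈ LinearMap.range (d p))
    (t : ℝ) (ht : 0 < t) :
    ∑ p ∈ Finset.range (n + 1),
        (-1 : ℂ) ^ p * (p : ℂ) * (heatTr (Lap C d p) t - (hdim C d p : ℂ)) =
      ∑ p ∈ Finset.range n, (-1 : ℂ) ^ (p + 1) * heatTr ((Lap C d (p + 1)).restrict (h p)) t :=
  alternating_weighted_heat_trace_general n C d hd htriv h t
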